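/- arXiv:1605.08949 — 2 statements merged into one kernel-verified Lean document; each statement's English description precedes it below -/
import Mathlib

section
/- Let S be a category with finite limits and C an abstract simplicial complex. An S-valued presheaf P : C^op → S is a sheaf (each canonical arrow into the product over a cover is the equalizer of the two comparison arrows into the product over pairwise intersections) if and only if for every U ∈ C the canonical arrow ⟨P_{{x}⊆U}⟩_{x∈U} : P(U) → ∏_{x∈U} P({x}) is an isomorphism. -/
open CategoryTheory CategoryTheory.Limits Opposite
open scoped Classical

/-- An abstract simplicial complex on a vertex set `X`. -/
structure SC (X : Type) where
  faces : Set (Finset X)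
  down_closed : ∀ {s t : Finset X}, s ∈ faces → t ⊆ s → t ∈ faces
  singleton_mem : ∀ x : X, {x} ∈ faces

/-- The poset of faces of a simplicial complex, ordered by inclusion. -/
def Face {X : Type} (C : SC X) : Type := {U : Finset X // U ∈ C.faces}

instance {X : Type} (C : SC X) : PartialOrder (Face C) :=
  Subtype.partialOrder _

/-- The singleton face on a vertex. -/
def sFace {X : Type} (C : SC X) (x : X) : Face C := ⟨{x}, C.singleton_mem x⟩

variable {S : Type*} [Category S]

/-- An `S`-valued presheaf on the simplicial complex `C`. -/
abbrev Psh {X : Type} (C : SC X) (S : Type*) [Category S] : Type _ :=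
  (Face C)ᵒᵖ ⥤ S

/-- The restriction arrow `P(V) ⟶ P(U)` for faces `U ⊆ V`. -/
def resA {X : Type} {C : SC X} (P : Psh C S) {U V : Face C} (h : U ≤ V) :
    P.obj (op V) ⟶ P.obj (op U) :=
  P.map (homOfLE h).op

/-- The canonical arrow `P(U) ⟶ ∏_{x∈U} P({x})`. -/
noncomputable def canMap {X : Type} {C : SC X} [HasFiniteLimits S]
    (P : Psh C S) (U : Face C) :
    P.obj (op U) ⟶ ∏ᶜ (fun x : {x // x ∈ U.1} => P.obj (op (sFace C x.1))) :=
  Pi.lift fun x => resA P (show sFace C x.1 ≤ U from Finset.singleton_subset_iff.mpr x.2)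

/-- The arrow `P(U) ⟶ ∏ᵢ P(Uᵢ)` for a cover `⋃ᵢ Uᵢ = U`. -/
noncomputable def coverMap {X : Type} {C : SC X} [HasFiniteLimits S]
    (P : Psh C S) {ι : Type} [Fintype ι] (Ui : ι → Face C) (U : Face C)
    (hcov : ∀ i, Ui i ≤ U) :
    P.obj (op U) ⟶ ∏ᶜ (fun i => P.obj (op (Ui i))) :=
  Pi.lift fun i => resA P (hcov i)

/-- The intersection of two faces, as a face. -/
noncomputable def interFace {X : Type} (C : SC X) (U V : Face C) : Face C :=
  ⟨U.1 ∩ V.1, C.down_closed U.2 (by classical exact Finset.inter_subset_left)⟩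

/-- The first comparison arrow `∏ᵢ P(Uᵢ) ⟶ ∏_{j,k} P(Uⱼ ∩ U_k)`. -/
noncomputable def cmpL {X : Type} {C : SC X} [HasFiniteLimits S]
    (P : Psh C S) {ι : Type} [Fintype ι] (Ui : ι → Face C) :
    (∏ᶜ (fun i => P.obj (op (Ui i)))) ⟶
      ∏ᶜ (fun jk : ι × ι => P.obj (op (interFace C (Ui jk.1) (Ui jk.2)))) :=
  Pi.lift fun jk => Pi.π _ jk.1 ≫
    resA P (show interFace C (Ui jk.1) (Ui jk.2) ≤ Ui jk.1 from by
      classical exact Finset.inter_subset_left)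

/-- The second comparison arrow `∏ᵢ P(Uᵢ) ⟶ ∏_{j,k} P(Uⱼ ∩ U_k)`. -/
noncomputable def cmpR {X : Type} {C : SC X} [HasFiniteLimits S]
    (P : Psh C S) {ι : Type} [Fintype ι] (Ui : ι → Face C) :
    (∏ᶜ (fun i => P.obj (op (Ui i)))) ⟶
      ∏ᶜ (fun jk : ι × ι => P.obj (op (interFace C (Ui jk.1) (Ui jk.2)))) :=
  Pi.lift fun jk => Pi.π _ jk.2 ≫
    resA P (show interFace C (Ui jk.1) (Ui jk.2) ≤ Ui jk.2 from by
      classical exact Finset.inter_subset_right)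

/-- The sheaf condition for an `S`-valued presheaf on a simplicial complex:
for every (finite) cover `⋃ᵢ Uᵢ = U`, the arrow `P(U) ⟶ ∏ᵢ P(Uᵢ)` is the
equalizer of the two comparison arrows into `∏_{j,k} P(Uⱼ ∩ U_k)`. -/
def IsSheafS {X : Type} {C : SC X} [HasFiniteLimits S] (P : Psh C S) : Prop :=
  ∀ (ι : Type) (_ : Fintype ι) (Ui : ι → Face C) (U : Face C)
    (hcov : ∀ i, Ui i ≤ U), (∀ x, x ∈ U.1 → ∃ i, x ∈ (Ui i).1) →
    (∀ (W : S) (k : W ⟶ ∏ᶜ (fun i => P.obj (op (Ui i)))),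
      k ≫ cmpL P Ui = k ≫ cmpR P Ui →
      ∃! l : W ⟶ P.obj (op U), l ≫ coverMap P Ui U hcov = k)

/-- The separatedness condition: for every (finite) cover `⋃ᵢ Uᵢ = U`, the
arrow `P(U) ⟶ ∏ᵢ P(Uᵢ)` is a monomorphism. -/
def IsSeparatedS {X : Type} {C : SC X} [HasFiniteLimits S] (P : Psh C S) : Prop :=
  ∀ (ι : Type) (_ : Fintype ι) (Ui : ι → Face C) (U : Face C)
    (hcov : ∀ i, Ui i ≤ U), (∀ x, x ∈ U.1 → ∃ i, x ∈ (Ui i).1) →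
    Mono (coverMap P Ui U hcov)

lemma resA_resA {X : Type} {C : SC X} (P : Psh C S) {U V W : Face C}
    (h1 : U ≤ V) (h2 : V ≤ W) :
    resA P h2 ≫ resA P h1 = resA P (le_trans h1 h2) := by
  simp only [resA, ← P.map_comp, ← op_comp, homOfLE_comp]

lemma hk_component {X : Type} {C : SC X} [HasFiniteLimits S] (P : Psh C S)
    {ι : Type} [Fintype ι] (Ui : ι → Face C) {W : S}
    {k : W ⟶ ∏ᶜ fun i => P.obj (op (Ui i))}
    (hk : k ≫ cmpL P Ui = k ≫ cmpR P Ui) {x : X} {i j : ι}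
    (hi : x ∈ (Ui i).1) (hj : x ∈ (Ui j).1) :
    k ≫ Pi.π _ i ≫ resA P (show sFace C x ≤ Ui i from
        Finset.singleton_subset_iff.mpr hi)
      = k ≫ Pi.π _ j ≫ resA P (show sFace C x ≤ Ui j from
        Finset.singleton_subset_iff.mpr hj) := by
  have h := congrArg (· ≫ Pi.π _ (i, j)) hk
  simp only [Category.assoc, cmpL, cmpR, limit.lift_π, Fan.mk_π_app] at h
  have hx : sFace C x ≤ interFace C (Ui i) (Ui j) :=
    Finset.singleton_subset_iff.mpr (Finset.mem_inter.mpr ⟨hi, hj⟩)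
  have h2 := congrArg (· ≫ resA P hx) h
  simp only [Category.assoc, resA_resA] at h2
  exact h2

/-- An `S`-valued presheaf on a simplicial complex (with `S`
having finite limits) is a sheaf iff the canonical arrow
`P(U) ⟶ ∏_{x∈U} P({x})` is an isomorphism for every face `U`. -/
theorem stmt6 {X : Type} {C : SC X} {S : Type*} [Category S]
    [HasFiniteLimits S] (P : Psh C S) :
    IsSheafS P ↔ ∀ U : Face C, IsIso (canMap P U) := by
  constructor
  · intro hsh U
    -- Step 1: homs into P(V) for an empty face V are unique (empty cover).
    have hterm : ∀ (V : Face C), V.1 = ∅ → ∀ (W : S)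
        (f g : W ⟶ P.obj (op V)), f = g := by
      intro V hV W f g
      obtain ⟨l, -, hu⟩ := hsh Empty inferInstance (fun i => i.elim) V
        (fun i => i.elim)
        (fun x hx => by rw [hV] at hx; exact absurd hx (Finset.notMem_empty x))
        W (Pi.lift fun i => i.elim)
        (by apply Pi.hom_ext; intro j; exact j.1.elim)
      have h1 := hu f (by apply Pi.hom_ext; intro i; exact i.elim)
      have h2 := hu g (by apply Pi.hom_ext; intro i; exact i.elim)
      rw [h1, h2]
    -- Step 2: the singleton cover of U.
    let ιU := {x // x ∈ U.1}
    haveI : Fintype ιU := FinsetCoe.fintype U.1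
    let Ui : ιU → Face C := fun x => sFace C x.1
    have hcov : ∀ i, Ui i ≤ U := fun i => Finset.singleton_subset_iff.mpr i.2
    have hsur : ∀ x, x ∈ U.1 → ∃ i, x ∈ (Ui i).1 :=
      fun x hx => ⟨⟨x, hx⟩, Finset.mem_singleton_self x⟩
    have heq : cmpL P Ui = cmpR P Ui := by
      apply Pi.hom_ext; intro jk
      simp only [cmpL, cmpR, limit.lift_π, Fan.mk_π_app]
      by_cases hab : jk.1 = jk.2
      · obtain ⟨a, b⟩ := jk
        cases hab
        rfl
      · apply hterm
        apply Finset.singleton_inter_of_notMem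
        exact fun h => hab (Subtype.ext (Finset.mem_singleton.mp h))
    have hcan : canMap P U = coverMap P Ui U hcov := rfl
    obtain ⟨l, hl, hu⟩ := hsh ιU inferInstance Ui U hcov hsur
      (∏ᶜ fun i => P.obj (op (Ui i))) (𝟙 _)
      (by rw [Category.id_comp, Category.id_comp, heq])
    obtain ⟨l', -, hu'⟩ := hsh ιU inferInstance Ui U hcov hsur
      (P.obj (op U)) (canMap P U)
      (by rw [heq])
    refine ⟨l, ?_, ?_⟩
    · rw [hu' (canMap P U ≫ l)
          (show (canMap P U ≫ l) ≫ coverMap P Ui U hcov = canMap P U by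
            rw [Category.assoc, hl, Category.comp_id]),
        hu' (𝟙 _)
          (show 𝟙 _ ≫ coverMap P Ui U hcov = canMap P U by
            rw [Category.id_comp, hcan])]
    · rw [hcan]; exact hl
  · intro hiso ι _fin Ui U hcov hsur W k hk
    classical
    choose idx hidx using hsur
    let m : W ⟶ ∏ᶜ fun x : {x // x ∈ U.1} => P.obj (op (sFace C x.1)) :=
      Pi.lift fun x => k ≫ Pi.π _ (idx x.1 x.2) ≫
        resA P (show sFace C x.1 ≤ Ui (idx x.1 x.2) from Finset.singleton_subset_iff.mpr (hidx x.1 x.2))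
    haveI := hiso U
    refine ⟨m ≫ inv (canMap P U), ?_, ?_⟩
    · -- existence: (m ≫ inv (canMap P U)) ≫ coverMap = k
      apply Pi.hom_ext; intro i
      haveI := hiso (Ui i)
      rw [← cancel_mono (canMap P (Ui i))]
      apply Pi.hom_ext; intro x
      have hxU : x.1 ∈ U.1 := hcov i x.2
      have main : (m ≫ inv (canMap P U)) ≫ resA P (hcov i)
            ≫ resA P (show sFace C x.1 ≤ Ui i from Finset.singleton_subset_iff.mpr x.2)
          = k ≫ Pi.π _ i ≫ resA P (show sFace C x.1 ≤ Ui i from Finset.singleton_subset_iff.mpr x.2) := by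
        rw [resA_resA]
        have h1 : (m ≫ inv (canMap P U))
              ≫ resA P (le_trans (show sFace C x.1 ≤ Ui i from Finset.singleton_subset_iff.mpr x.2) (hcov i))
            = (m ≫ inv (canMap P U)) ≫ canMap P U
              ≫ Pi.π _ (⟨x.1, hxU⟩ : {y // y ∈ U.1}) := by
          simp [canMap]
        rw [h1]
        have h2 : (m ≫ inv (canMap P U)) ≫ canMap P U
              ≫ Pi.π _ (⟨x.1, hxU⟩ : {y // y ∈ U.1})
            = m ≫ Pi.π _ (⟨x.1, hxU⟩ : {y // y ∈ U.1}) := by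
          simp
        rw [h2]
        have h3 : m ≫ Pi.π _ (⟨x.1, hxU⟩ : {y // y ∈ U.1})
            = k ≫ Pi.π _ (idx x.1 hxU)
              ≫ resA P (show sFace C x.1 ≤ Ui (idx x.1 hxU) from Finset.singleton_subset_iff.mpr (hidx x.1 hxU)) := by
          simp [m]
        rw [h3]
        exact hk_component P Ui hk (hidx x.1 hxU) x.2
      simpa [coverMap, canMap] using main
    · intro l' hl'
      rw [← cancel_mono (canMap P U)]
      simp only [Category.assoc, IsIso.inv_hom_id, Category.comp_id]
      apply Pi.hom_ext; intro x
      have h2 : l' ≫ resA P (hcov (idx x.1 x.2)) = k ≫ Pi.π _ (idx x.1 x.2) := by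
        rw [← hl']; simp [coverMap]
      calc (l' ≫ canMap P U) ≫ Pi.π _ x
          = l' ≫ resA P (hcov (idx x.1 x.2))
            ≫ resA P (show sFace C x.1 ≤ Ui (idx x.1 x.2) from Finset.singleton_subset_iff.mpr (hidx x.1 x.2)) := by
            rw [resA_resA]; simp [canMap]
        _ = k ≫ Pi.π _ (idx x.1 x.2)
            ≫ resA P (show sFace C x.1 ≤ Ui (idx x.1 x.2) from Finset.singleton_subset_iff.mpr (hidx x.1 x.2)) := by
            rw [← Category.assoc, h2, Category.assoc]
        _ = m ≫ Pi.π _ x := by simp [m]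
end

section
/- Let S be a category with finite limits and C an abstract simplicial complex. An S-valued presheaf P on C is separated (each canonical arrow into the product over a cover is monic) if and only if each canonical arrow ⟨P_{{x}⊆U}⟩_{x∈U} : P(U) → ∏_{x∈U} P({x}) is a monomorphism, i.e., iff P is a subpresheaf of a sheaf. -/
open CategoryTheory CategoryTheory.Limits Opposite
open scoped Classical

variable {S : Type*} [Category S]

/-!
Every cover of a face `U` is refined by the cover of `U` by its vertices, so `canMap P U`
factors through each arrow `P(U) ⟶ ∏ᵢ P(Uᵢ)`: monic `canMap`s make `P` separated, and
conversely because the vertices themselves form a cover.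
The `canMap`s form a natural transformation into `U ↦ ∏_{x∈U} P({x})`, which is a sheaf:
a compatible family is determined by, and glued from, its values at the vertices.
Conversely sheaves are separated, and separatedness passes to subpresheaves.
-/

open CategoryTheory CategoryTheory.Limits Opposite

variable {X : Type} {C : SC X}

lemma resA_comp (P : Psh C S) {U V W : Face C} (h₁ : U ≤ V) (h₂ : V ≤ W) :
    resA P h₂ ≫ resA P h₁ = resA P (h₁.trans h₂) := by
  rw [resA, resA, resA, ← P.map_comp]
  rfl

lemma sFace_le {x : X} {U : Face C} (hx : x ∈ U.1) : sFace C x ≤ U :=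
  Finset.singleton_subset_iff.mpr hx

variable [HasFiniteLimits S]

section CoverMap

variable {ι : Type} [Fintype ι] (Ui : ι → Face C) (U : Face C) (hcov : ∀ i, Ui i ≤ U)

@[simp]
lemma coverMap_π (P : Psh C S) (i : ι) :
    coverMap P Ui U hcov ≫ Pi.π _ i = resA P (hcov i) :=
  Pi.lift_π _ _

@[simp]
lemma canMap_π (P : Psh C S) (x : {x // x ∈ U.1}) :
    canMap P U ≫ Pi.π _ x = resA P (sFace_le x.2) :=
  Pi.lift_π _ _

lemma canMap_eq_coverMap (P : Psh C S) :
    canMap P U = coverMap P (fun x : {x // x ∈ U.1} => sFace C x.1) U (fun x => sFace_le x.2) :=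
  rfl

lemma exists_coverMap_comp_eq_canMap (P : Psh C S)
    (hsur : ∀ x, x ∈ U.1 → ∃ i, x ∈ (Ui i).1) :
    ∃ r, coverMap P Ui U hcov ≫ r = canMap P U := by
  choose idx hidx using hsur
  refine ⟨Pi.lift fun x => Pi.π _ (idx x.1 x.2) ≫ resA P (sFace_le (hidx x.1 x.2)), ?_⟩
  refine Pi.hom_ext _ _ fun x => ?_
  rw [Category.assoc, Pi.lift_π, ← Category.assoc, coverMap_π, resA_comp, canMap_π]

lemma coverMap_comp_cmpL_eq (F : Psh C S) :
    coverMap F Ui U hcov ≫ cmpL F Ui = coverMap F Ui U hcov ≫ cmpR F Ui := by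
  refine Pi.hom_ext _ _ fun jk => ?_
  simp only [cmpL, cmpR, Category.assoc, Pi.lift_π]
  simp only [← Category.assoc, coverMap_π, resA_comp]

lemma coverMap_comp_piMap {P F : Psh C S} (η : P ⟶ F) :
    coverMap P Ui U hcov ≫ Limits.Pi.map (fun i => η.app (op (Ui i))) =
      η.app (op U) ≫ coverMap F Ui U hcov := by
  refine Pi.hom_ext _ _ fun i => ?_
  rw [Category.assoc, Pi.map_π, ← Category.assoc, coverMap_π, Category.assoc, coverMap_π]
  exact η.naturality (homOfLE (hcov i)).op

end CoverMap

lemma isSeparatedS_iff_mono_canMap (P : Psh C S) :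
    IsSeparatedS P ↔ ∀ U : Face C, Mono (canMap P U) := by
  refine ⟨fun hsep U => ?_, fun hcan ι _ Ui U hcov hsur => ?_⟩
  · rw [canMap_eq_coverMap]
    exact hsep _ _ _ U _ fun x hx => ⟨⟨x, hx⟩, Finset.mem_singleton_self x⟩
  · obtain ⟨r, hr⟩ := exists_coverMap_comp_eq_canMap Ui U hcov P hsur
    exact mono_of_mono_fac hr

lemma IsSheafS.isSeparatedS {F : Psh C S} (hF : IsSheafS F) : IsSeparatedS F := by
  intro ι hι Ui U hcov hsur
  constructor
  intro W f g hfg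
  obtain ⟨l, -, hl⟩ := hF ι hι Ui U hcov hsur W (g ≫ coverMap F Ui U hcov)
    (by rw [Category.assoc, Category.assoc, coverMap_comp_cmpL_eq])
  exact (hl f hfg).trans (hl g rfl).symm

lemma IsSeparatedS.of_mono {P F : Psh C S} (hF : IsSeparatedS F) (η : P ⟶ F)
    (hη : ∀ U : Face C, Mono (η.app (op U))) : IsSeparatedS P := by
  intro ι hι Ui U hcov hsur
  have hmonoF := hF ι hι Ui U hcov hsur
  have hmonoη := hη U
  exact mono_of_mono_fac (coverMap_comp_piMap Ui U hcov η)

section VertexProd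

variable (A : X → S)

-- Reducible, so that `(vertexProd A).obj V` is seen as a product when composed with `Pi.π`.
noncomputable abbrev vertexProd : Psh C S where
  obj V := ∏ᶜ fun x : {x // x ∈ V.unop.1} => A x.1
  map {V _} f :=
    Pi.lift fun x => Pi.π (fun y : {y // y ∈ V.unop.1} => A y.1) ⟨x.1, f.unop.le x.2⟩
  map_id _ := Pi.hom_ext _ _ fun _ => by simp
  map_comp _ _ := Pi.hom_ext _ _ fun _ => by simp

lemma vertexProd_resA_π {U V : Face C} (h : U ≤ V) (x : {x // x ∈ U.1}) :
    resA (vertexProd A) h ≫ Pi.π _ x =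
      Pi.π (fun y : {y // y ∈ V.1} => A y.1) ⟨x.1, h x.2⟩ :=
  Pi.lift_π _ _

variable {A} {ι : Type} [Fintype ι] {Ui : ι → Face C}

lemma vertexProd_coverMap_π_π (U : Face C) (hcov : ∀ i, Ui i ≤ U) (i : ι)
    (x : {x // x ∈ (Ui i).1}) :
    coverMap (vertexProd A) Ui U hcov ≫ Pi.π _ i ≫ Pi.π _ x =
      Pi.π (fun y : {y // y ∈ U.1} => A y.1) ⟨x.1, hcov i x.2⟩ := by
  rw [← Category.assoc, coverMap_π, vertexProd_resA_π]

lemma vertexProd_coverMap_mono (U : Face C) (hcov : ∀ i, Ui i ≤ U)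
    (hsur : ∀ x, x ∈ U.1 → ∃ i, x ∈ (Ui i).1) :
    Mono (coverMap (vertexProd A) Ui U hcov) := by
  constructor
  intro W f g hfg
  refine Pi.hom_ext _ _ fun ⟨x, hx⟩ => ?_
  obtain ⟨i, hi⟩ := hsur x hx
  simpa only [Category.assoc, vertexProd_coverMap_π_π]
    using hfg =≫ (Pi.π _ i ≫ Pi.π _ ⟨x, hi⟩)

lemma vertexProd_compatible {W : S} {k : W ⟶ ∏ᶜ fun i => (vertexProd A).obj (op (Ui i))}
    (hk : k ≫ cmpL (vertexProd A) Ui = k ≫ cmpR (vertexProd A) Ui) {j j' : ι} {x : X}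
    (hj : x ∈ (Ui j).1) (hj' : x ∈ (Ui j').1) :
    k ≫ Pi.π _ j ≫ Pi.π _ (⟨x, hj⟩ : {y // y ∈ (Ui j).1}) =
      k ≫ Pi.π _ j' ≫ Pi.π _ (⟨x, hj'⟩ : {y // y ∈ (Ui j').1}) := by
  have hx : x ∈ (interFace C (Ui j) (Ui j')).1 := Finset.mem_inter.2 ⟨hj, hj'⟩
  simpa only [cmpL, cmpR, Category.assoc, Pi.lift_π_assoc, vertexProd_resA_π]
    using hk =≫ (Pi.π _ (j, j') ≫ Pi.π _ ⟨x, hx⟩)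

lemma vertexProd_isSheafS : IsSheafS (vertexProd A : Psh C S) := by
  intro ι _ Ui U hcov hsur W k hk
  have hmono := vertexProd_coverMap_mono (A := A) U hcov hsur
  choose idx hidx using hsur
  let l : W ⟶ (vertexProd A).obj (op U) :=
    Pi.lift fun x => k ≫ Pi.π _ (idx x.1 x.2) ≫
      Pi.π (fun y : {y // y ∈ (Ui (idx x.1 x.2)).1} => A y.1) ⟨x.1, hidx x.1 x.2⟩
  have hl : l ≫ coverMap (vertexProd A) Ui U hcov = k := by
    refine Pi.hom_ext _ _ fun i => Pi.hom_ext _ _ fun ⟨x, hx⟩ => ?_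
    simp only [l, Category.assoc, vertexProd_coverMap_π_π, Pi.lift_π]
    exact vertexProd_compatible hk _ hx
  exact ⟨l, hl, fun l' hl' => (cancel_mono _).1 (hl'.trans hl.symm)⟩

end VertexProd

noncomputable def canMapNat (P : Psh C S) :
    P ⟶ vertexProd fun x => P.obj (op (sFace C x)) where
  app V := canMap P V.unop
  naturality V U f := Pi.hom_ext _ _ fun x => by
    simp only [Category.assoc, Pi.lift_π, canMap_π]
    exact resA_comp P _ _

/-- An `S`-valued presheaf on a simplicial complex is
separated (the arrow into the product over every cover is monic) iff every
canonical arrow `P(U) ⟶ ∏_{x∈U} P({x})` is a monomorphism, i.e. iff `P` is a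
subpresheaf of a sheaf (admits a levelwise-monic natural transformation into
some sheaf). -/
theorem stmt7 {X : Type} {C : SC X} {S : Type*} [Category S]
    [HasFiniteLimits S] (P : Psh C S) :
    (IsSeparatedS P ↔ ∀ U : Face C, Mono (canMap P U)) ∧
    (IsSeparatedS P ↔ ∃ (F : Psh C S) (η : P ⟶ F), IsSheafS F ∧
      ∀ U : Face C, Mono (η.app (op U))) := by
  have hcan := isSeparatedS_iff_mono_canMap P
  refine ⟨hcan, fun hsep => ?_, fun ⟨F, η, hF, hη⟩ => hF.isSeparatedS.of_mono η hη⟩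
  exact ⟨_, canMapNat P, vertexProd_isSheafS, hcan.mp hsep⟩
end
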